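/- arXiv:math/0506168 — 2 statements merged into one kernel-verified Lean document; each statement's English description precedes it below -/
import Mathlib

section
/- Let $\mathcal{A}$ be a small full subcategory of a category $\mathcal{K}$, let $D : \mathcal{D} \to \mathcal{A}$ be a small diagram, and let $(\delta_d : Dd \to K)$ be a cocone in $\mathcal{K}$ on objects of $\mathcal{A}$. If the canonical functor $E_{\mathcal{A}} : \mathcal{K} \to \mathrm{Set}^{\mathcal{A}^{\mathrm{op}}}$ sends this cocone to a colimit cocone in $\mathrm{Set}^{\mathcal{A}^{\mathrm{op}}}$ and $E_{\mathcal{A}}$ is full, then $(\delta_d : Dd \to K)$ is a weak colimit cocone in $\mathcal{K}$. -/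
open CategoryTheory CategoryTheory.Limits

/-- The canonical (restricted Yoneda) functor `E_𝒜 : 𝒦 ⥤ Set^{𝒜ᵒᵖ}`. -/
def restrictedYonedaE {A : Type v} [SmallCategory A] {K : Type u} [Category.{v} K]
    (ι : A ⥤ K) : K ⥤ (Aᵒᵖ ⥤ Type v) :=
  yoneda ⋙ (Functor.whiskeringLeft Aᵒᵖ Kᵒᵖ (Type v)).obj ι.op

lemma restrictedYonedaE_map_injective {A : Type v} [SmallCategory A] {K : Type u}
    [Category.{v} K] (ι : A ⥤ K) {a : A} {Y : K} {f g : ι.obj a ⟶ Y}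
    (h : (restrictedYonedaE ι).map f = (restrictedYonedaE ι).map g) : f = g := by
  have hid := types_congr_hom (congr_app h (Opposite.op a)) (𝟙 (ι.obj a))
  simpa using (show 𝟙 _ ≫ f = 𝟙 _ ≫ g from hid)

lemma CategoryTheory.Limits.IsColimit.fac_of_map_eq_desc {J K L : Type*} [Category J]
    [Category K] [Category L] (F : K ⥤ L) {G : J ⥤ K} {c s : Cocone G}
    (hc : IsColimit (F.mapCocone c)) {m : c.pt ⟶ s.pt} (hm : F.map m = hc.desc (F.mapCocone s))
    (hF : ∀ j {f g : G.obj j ⟶ s.pt}, F.map f = F.map g → f = g) (j : J) :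
    c.ι.app j ≫ m = s.ι.app j :=
  hF j <| by
    rw [F.map_comp, hm]
    exact hc.fac (F.mapCocone s) j

theorem weak_colimit_of_E_colimit_general {A : Type v} [SmallCategory A] {K : Type u}
    [Category.{v} K] (ι : A ⥤ K)
    {D' : Type v} [SmallCategory D'] (D : D' ⥤ A)
    (c : Cocone (D ⋙ ι))
    (hcolim : Nonempty (IsColimit ((restrictedYonedaE ι).mapCocone c)))
    (hfull : ∀ {X Y : K} (φ : (restrictedYonedaE ι).obj X ⟶ (restrictedYonedaE ι).obj Y),
      ∃ ψ : X ⟶ Y, (restrictedYonedaE ι).map ψ = φ) :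
    ∀ s : Cocone (D ⋙ ι), ∃ m : c.pt ⟶ s.pt, ∀ d, c.ι.app d ≫ m = s.ι.app d := by
  intro s
  obtain ⟨hc⟩ := hcolim
  obtain ⟨m, hm⟩ := hfull (hc.desc ((restrictedYonedaE ι).mapCocone s))
  exact ⟨m, hc.fac_of_map_eq_desc _ hm fun _ => restrictedYonedaE_map_injective ι⟩

/-- If `E_𝒜` sends a cocone on a diagram of objects of `𝒜` to a colimit cocone and
`E_𝒜` is full, then the cocone is a weak colimit cocone in `𝒦`. -/
theorem weak_colimit_of_E_colimit {A : Type v} [SmallCategory A] {K : Type u}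
    [Category.{v} K] (ι : A ⥤ K) [ι.Full] [ι.Faithful]
    {D' : Type v} [SmallCategory D'] (D : D' ⥤ A)
    (c : Cocone (D ⋙ ι))
    (hcolim : Nonempty (IsColimit ((restrictedYonedaE ι).mapCocone c)))
    (hfull : ∀ {X Y : K} (φ : (restrictedYonedaE ι).obj X ⟶ (restrictedYonedaE ι).obj Y),
      ∃ ψ : X ⟶ Y, (restrictedYonedaE ι).map ψ = φ) :
    ∀ s : Cocone (D ⋙ ι), ∃ m : c.pt ⟶ s.pt, ∀ d, c.ι.app d ≫ m = s.ι.app d :=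
  weak_colimit_of_E_colimit_general ι D c hcolim hfull
end

section
/- Let $\mathcal{X}$ be a category with weak limits of finite diagrams and $H : \mathcal{X} \to \mathrm{Set}$ a functor. Then $H$ is left covering (for every finite diagram $D$ with weak limit $X$, the canonical map $H(X) \to \lim HD$ is surjective) if and only if $H$ is weakly continuous on finite diagrams (preserves weak finite limits, i.e., sends weak limit cones to weak limit cones). -/
open CategoryTheory CategoryTheory.Limits

/-- A cone is a weak limit cone if every cone factors through it (not necessarily
uniquely). -/
def IsWeakLimit {J : Type w} [Category.{w'} J] {C : Type u} [Category.{v} C]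
    {F : J ⥤ C} (c : Cone F) : Prop :=
  ∀ s : Cone F, ∃ m : s.pt ⟶ c.pt, ∀ j, m ≫ c.π.app j = s.π.app j

/-! A cone over a diagram of types is a weak limit iff every section of the diagram comes from a
point of the cone: a section is a cone with vertex `PUnit`, and conversely a map out of any vertex
can be chosen pointwise, because surjections of sets split. Both conditions of the theorem thus
say the same about `H.mapCone c`. -/

namespace CategoryTheory.Limits.Types

theorem isWeakLimit_iff {J : Type w} [Category.{w'} J] {F : J ⥤ Type u} (c : Cone F) :
    _root_.IsWeakLimit c ↔ ∀ s : F.sections, ∃ x : c.pt, ∀ j, c.π.app j x = s.1 j := by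
  refine ⟨fun hc s ↦ ?_, fun h t ↦ ?_⟩
  · obtain ⟨m, hm⟩ := hc (coneOfSection s.2)
    exact ⟨m PUnit.unit, fun j ↦ ConcreteCategory.congr_hom (hm j) PUnit.unit⟩
  · choose m hm using fun y : t.pt ↦ h (sectionOfCone t y)
    exact ⟨TypeCat.ofHom m, fun j ↦ by ext y; exact hm y j⟩

end CategoryTheory.Limits.Types

theorem left_covering_iff_weakly_continuous_general {X : Type u} [Category.{v} X]
    (H : X ⥤ Type v) :
    (∀ (𝒟 : Type) [SmallCategory 𝒟] [FinCategory 𝒟] (D : 𝒟 ⥤ X) (c : Cone D),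
        _root_.IsWeakLimit c →
          ∀ s : (D ⋙ H).sections, ∃ x : H.obj c.pt,
            ∀ j, H.map (c.π.app j) x = s.1 j) ↔
      (∀ (𝒟 : Type) [SmallCategory 𝒟] [FinCategory 𝒟] (D : 𝒟 ⥤ X) (c : Cone D),
        _root_.IsWeakLimit c → _root_.IsWeakLimit (H.mapCone c)) := by
  exact forall₄_congr fun 𝒟 _ _ D ↦ forall₂_congr fun c _ ↦
    (Types.isWeakLimit_iff (H.mapCone c)).symm

/-- For a category `X` with weak finite limits, a functor `H : X ⥤ Set` is left
covering (the canonical map `H(X) → lim HD` is surjective for each weak limit `X` of a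
finite diagram `D`) iff it is weakly continuous on finite diagrams (preserves weak
finite limits). -/
theorem left_covering_iff_weakly_continuous {X : Type u} [Category.{v} X]
    (H : X ⥤ Type v)
    (hwk : ∀ (𝒟 : Type) [SmallCategory 𝒟] [FinCategory 𝒟] (D : 𝒟 ⥤ X),
      ∃ c : Cone D, IsWeakLimit c) :
    (∀ (𝒟 : Type) [SmallCategory 𝒟] [FinCategory 𝒟] (D : 𝒟 ⥤ X) (c : Cone D),
        _root_.IsWeakLimit c →
          ∀ s : (D ⋙ H).sections, ∃ x : H.obj c.pt,
            ∀ j, H.map (c.π.app j) x = s.1 j) ↔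
      (∀ (𝒟 : Type) [SmallCategory 𝒟] [FinCategory 𝒟] (D : 𝒟 ⥤ X) (c : Cone D),
        _root_.IsWeakLimit c → _root_.IsWeakLimit (H.mapCone c)) :=
  left_covering_iff_weakly_continuous_general H
end
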